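/- Let 1 ≤ k < n and let G be a simple graph of order n whose complement has at least k balanced bipartite components. Then n − 2 is an eigenvalue of Q(G) with multiplicity at least k, and in particular q_{k+1}(G) = n − 2. -/

import Mathlib

open Matrix SimpleGraph
open scoped Classical

/-- The `k`-th largest eigenvalue (1-indexed, counted with multiplicity) of a real
symmetric (Hermitian) matrix; junk value `0` if `M` is not Hermitian or `k` is out of range. -/
noncomputable def kthEig {V : Type*} [Fintype V] [DecidableEq V]
    (M : Matrix V V ℝ) (k : ℕ) : ℝ :=
  if hM : M.IsHermitian then
    if h : k - 1 < Fintype.card V then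
      letI f : Fin (Fintype.card V) → ℝ := hM.eigenvalues ∘ (Fintype.equivFin V).symm
      (f ∘ Tuple.sort f) (Fin.rev ⟨k - 1, h⟩)
    else 0
  else 0

/-- The signless Laplacian `Q(G) = D(G) + A(G)` of a simple graph `G`. -/
noncomputable def signlessLap {V : Type*} [Fintype V] [DecidableEq V]
    (G : SimpleGraph V) [DecidableRel G.Adj] : Matrix V V ℝ :=
  G.degMatrix ℝ + G.adjMatrix ℝ

/-- `qEig G k` is the `k`-th largest signless Laplacian eigenvalue `q_k(G)`. -/
noncomputable def qEig {V : Type*} [Fintype V] [DecidableEq V]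
    (G : SimpleGraph V) [DecidableRel G.Adj] (k : ℕ) : ℝ :=
  kthEig (signlessLap G) k

/-- `c` is a bipartite connected component of `H`: the vertex set of the component splits
into two disjoint classes `U`, `W` such that every edge of the component joins `U` and `W`. -/
def IsBipartiteComponent {V : Type*} (H : SimpleGraph V) (c : H.ConnectedComponent) : Prop :=
  ∃ U W : Set V, U ∪ W = c.supp ∧ Disjoint U W ∧
    ∀ ⦃u v : V⦄, u ∈ c.supp → H.Adj u v → (u ∈ U ∧ v ∈ W) ∨ (u ∈ W ∧ v ∈ U)

/-- `c` is a balanced bipartite connected component of `H`: bipartite with vertex classes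
of equal size. -/
def IsBalancedBipartiteComponent {V : Type*} (H : SimpleGraph V)
    (c : H.ConnectedComponent) : Prop :=
  ∃ U W : Set V, U ∪ W = c.supp ∧ Disjoint U W ∧ U.ncard = W.ncard ∧
    ∀ ⦃u v : V⦄, u ∈ c.supp → H.Adj u v → (u ∈ U ∧ v ∈ W) ∨ (u ∈ W ∧ v ∈ U)

/-- `G` is the complete multipartite graph whose parts are the fibers of `p`:
two vertices are adjacent iff they lie in different parts. -/
def IsCompleteMultipartiteWith {V ι : Type*} (G : SimpleGraph V) (p : V → ι) : Prop :=
  ∀ u v : V, G.Adj u v ↔ p u ≠ p v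

/-!
Write `H = Gᶜ`. Then `Q(G) + Q(H) = (n - 2) I + J` with `J` the all-ones matrix, and `Q(H)` is
positive semidefinite. A balanced bipartite component of `H` with classes `U`, `W` gives the
vector `1_U - 1_W`, which is killed by both `Q(H)` and `J`; these vectors have disjoint supports,
so the eigenspace of `n - 2` has dimension at least `k`. The eigenvalue count then follows from
the min-max principle: on the hyperplane `∑ x = 0` the quadratic form of `Q(G)` is at most
`(n - 2) ‖x‖²`, so at most one eigenvalue exceeds `n - 2`; and adding `1_U` to those eigenvectors
gives a `(k + 1)`-dimensional space on which it is at least `(n - 2) ‖x‖²`, because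
`1_U ⬝ Q(H) 1_U = ∑_{u ∈ U} deg_H u ≤ |U| |W| = |U|²`.
-/

section Sorted

variable {α : Type*} [LinearOrder α] {N : ℕ} {g : Fin N → α} {t : α} {k : ℕ}

theorem Monotone.le_apply_rev (hg : Monotone g) (hk : k < N)
    (hcard : k + 1 ≤ Fintype.card {i // t ≤ g i}) : t ≤ g (Fin.rev ⟨k, hk⟩) := by
  by_contra! hlt
  have hsub : (Finset.univ.filter fun i => t ≤ g i) ⊆ Finset.Ioi (Fin.rev ⟨k, hk⟩) :=
    fun i hi => Finset.mem_Ioi.mpr <| lt_of_not_ge fun hle =>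
      (hlt.trans_le' (hg hle)).not_ge (Finset.mem_filter.mp hi).2
  have := Finset.card_le_card hsub
  rw [Fin.card_Ioi, Fin.val_rev, Fin.val_mk, ← Fintype.card_subtype] at this
  omega

theorem Monotone.apply_rev_le (hg : Monotone g) (hk : k < N)
    (hcard : Fintype.card {i // t < g i} ≤ k) : g (Fin.rev ⟨k, hk⟩) ≤ t := by
  by_contra! hgt
  have hsub : Finset.Ici (Fin.rev ⟨k, hk⟩) ⊆ Finset.univ.filter fun i => t < g i :=
    fun i hi => Finset.mem_filter.mpr ⟨Finset.mem_univ i, hgt.trans_le (hg (Finset.mem_Ici.mp hi))⟩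
  have := Finset.card_le_card hsub
  rw [Fin.card_Ici, Fin.val_rev, Fin.val_mk, ← Fintype.card_subtype] at this
  omega

end Sorted

theorem kthEig_add_one_eq {V : Type*} [Fintype V] [DecidableEq V] {M : Matrix V V ℝ}
    (hM : M.IsHermitian) {t : ℝ} {k : ℕ}
    (hge : k + 1 ≤ Fintype.card {i // t ≤ hM.eigenvalues i})
    (hgt : Fintype.card {i // t < hM.eigenvalues i} ≤ k) :
    kthEig M (k + 1) = t := by
  have hk : k < Fintype.card V := hge.trans (Fintype.card_subtype_le _)
  rw [kthEig, dif_pos hM, dif_pos (by simpa using hk)]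
  set f := hM.eigenvalues ∘ (Fintype.equivFin V).symm
  have hcard (p : ℝ → Prop) [DecidablePred p] :
      Fintype.card {i // p ((f ∘ Tuple.sort f) i)} = Fintype.card {i // p (hM.eigenvalues i)} :=
    Fintype.card_congr <|
      ((Tuple.sort f).trans (Fintype.equivFin V).symm).subtypeEquiv fun _ => Iff.rfl
  exact le_antisymm ((Tuple.monotone_sort f).apply_rev_le hk ((hcard (t < ·)).trans_le hgt))
    ((Tuple.monotone_sort f).le_apply_rev hk (hge.trans_eq (hcard (t ≤ ·)).symm))

theorem Module.finrank_le_card_of_sum_mul_sq_nonneg {M ι : Type*} [AddCommGroup M] [Module ℝ M]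
    [Fintype ι] (c : M →ₗ[ℝ] ι → ℝ) (hc : Function.Injective c) (w : ι → ℝ)
    (hw : ∀ x, 0 ≤ ∑ i, w i * c x i ^ 2) :
    Module.finrank ℝ M ≤ Fintype.card {i // 0 ≤ w i} := by
  let φ : M →ₗ[ℝ] {i // 0 ≤ w i} → ℝ := (LinearMap.funLeft ℝ ℝ Subtype.val).comp c
  have hφ : Function.Injective φ := by
    refine (injective_iff_map_eq_zero φ).mpr fun x hx => hc ?_
    have hzero : ∀ i, 0 ≤ w i → c x i = 0 := fun i hi => congrFun hx ⟨i, hi⟩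
    have hterm : ∀ i ∈ Finset.univ, w i * c x i ^ 2 ≤ 0 := fun i _ => by
      rcases le_or_gt 0 (w i) with hi | hi
      · simp [hzero i hi]
      · exact mul_nonpos_of_nonpos_of_nonneg hi.le (sq_nonneg _)
    have hsum := (Finset.sum_eq_zero_iff_of_nonpos hterm).mp
      ((hw x).antisymm' (Finset.sum_nonpos hterm))
    ext i
    rw [map_zero, Pi.zero_apply]
    rcases le_or_gt 0 (w i) with hi | hi
    · exact hzero i hi
    · simpa [hi.ne] using hsum i (Finset.mem_univ i)
  simpa using LinearMap.finrank_le_finrank_of_injective hφ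

namespace Matrix.IsHermitian

variable {V : Type*} [Fintype V] {A : Matrix V V ℝ}

theorem dotProduct_mulVec_comm (hA : A.IsHermitian) (x y : V → ℝ) :
    x ⬝ᵥ (A *ᵥ y) = y ⬝ᵥ (A *ᵥ x) := by
  rw [dotProduct_mulVec, ← mulVec_transpose, (isHermitian_iff_isSymm.mp hA).eq, dotProduct_comm]

theorem le_dotProduct_mulVec_of_mem_sup_span_singleton (hA : A.IsHermitian)
    {E : Submodule ℝ (V → ℝ)} {t : ℝ} (hE : ∀ x ∈ E, A *ᵥ x = t • x) {y : V → ℝ}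
    (hy : t * (y ⬝ᵥ y) ≤ y ⬝ᵥ (A *ᵥ y)) :
    ∀ z ∈ E ⊔ ℝ ∙ y, t * (z ⬝ᵥ z) ≤ z ⬝ᵥ (A *ᵥ z) := by
  intro z hz
  obtain ⟨x, hx, _, hby, rfl⟩ := Submodule.mem_sup.mp hz
  obtain ⟨b, rfl⟩ := Submodule.mem_span_singleton.mp hby
  have hxy := hA.dotProduct_mulVec_comm x y
  simp only [mulVec_add, mulVec_smul, hE x hx, dotProduct_add, add_dotProduct, dotProduct_smul,
    smul_dotProduct, smul_eq_mul] at hxy ⊢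
  rw [hxy, dotProduct_comm y x]
  nlinarith [mul_nonneg (sq_nonneg b) (sub_nonneg.mpr hy)]

variable [DecidableEq V] (hA : A.IsHermitian)

theorem dotProduct_mulVec_eq_sum (x : V → ℝ) :
    x ⬝ᵥ (A *ᵥ x) =
      ∑ i, hA.eigenvalues i * (star (hA.eigenvectorUnitary : Matrix V V ℝ) *ᵥ x) i ^ 2 := by
  conv_lhs => rw [hA.spectral_theorem]
  rw [Unitary.conjStarAlgAut_apply, ← mulVec_mulVec, ← mulVec_mulVec, dotProduct_mulVec,
    ← mulVec_transpose]
  simp [dotProduct, mulVec_diagonal, sq, mul_left_comm, star_eq_conjTranspose,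
    conjTranspose_eq_transpose_of_trivial]

theorem dotProduct_self_eq_sum (x : V → ℝ) :
    x ⬝ᵥ x = ∑ i, (star (hA.eigenvectorUnitary : Matrix V V ℝ) *ᵥ x) i ^ 2 := by
  calc x ⬝ᵥ x = x ⬝ᵥ (((hA.eigenvectorUnitary : Matrix V V ℝ) *
        star (hA.eigenvectorUnitary : Matrix V V ℝ)) *ᵥ x) := by
        rw [← Unitary.coe_star, Unitary.coe_mul_star_self, one_mulVec]
    _ = _ := by
      rw [← mulVec_mulVec, dotProduct_mulVec, ← mulVec_transpose]
      simp [dotProduct, sq, star_eq_conjTranspose, conjTranspose_eq_transpose_of_trivial]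

theorem dotProduct_mulVec_sub_eq_sum (x : V → ℝ) (t : ℝ) :
    x ⬝ᵥ (A *ᵥ x) - t * (x ⬝ᵥ x) =
      ∑ i, (hA.eigenvalues i - t) * (star (hA.eigenvectorUnitary : Matrix V V ℝ) *ᵥ x) i ^ 2 := by
  simp only [hA.dotProduct_mulVec_eq_sum, hA.dotProduct_self_eq_sum, Finset.mul_sum,
    ← Finset.sum_sub_distrib, sub_mul]

theorem injective_mulVec_star_eigenvectorUnitary :
    Function.Injective (star (hA.eigenvectorUnitary : Matrix V V ℝ)).mulVecLin := by
  refine (injective_iff_map_eq_zero _).mpr fun x hx => dotProduct_self_eq_zero.mp ?_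
  simp_all [hA.dotProduct_self_eq_sum x]

theorem finrank_le_card_le_eigenvalues (W : Submodule ℝ (V → ℝ)) {t : ℝ}
    (hW : ∀ x ∈ W, t * (x ⬝ᵥ x) ≤ x ⬝ᵥ (A *ᵥ x)) :
    Module.finrank ℝ W ≤ Fintype.card {i // t ≤ hA.eigenvalues i} := by
  have := Module.finrank_le_card_of_sum_mul_sq_nonneg
    ((star (hA.eigenvectorUnitary : Matrix V V ℝ)).mulVecLin ∘ₗ W.subtype)
    (hA.injective_mulVec_star_eigenvectorUnitary.comp Subtype.val_injective)
    (fun i => hA.eigenvalues i - t)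
    (fun x => by simpa [← hA.dotProduct_mulVec_sub_eq_sum] using hW x x.2)
  exact this.trans_eq (Fintype.card_congr (Equiv.subtypeEquivRight fun _ => sub_nonneg))

theorem card_lt_eigenvalues_add_finrank_le (W : Submodule ℝ (V → ℝ)) {t : ℝ}
    (hW : ∀ x ∈ W, x ⬝ᵥ (A *ᵥ x) ≤ t * (x ⬝ᵥ x)) :
    Fintype.card {i // t < hA.eigenvalues i} + Module.finrank ℝ W ≤ Fintype.card V := by
  have hle := Module.finrank_le_card_of_sum_mul_sq_nonneg
    ((star (hA.eigenvectorUnitary : Matrix V V ℝ)).mulVecLin ∘ₗ W.subtype)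
    (hA.injective_mulVec_star_eigenvectorUnitary.comp Subtype.val_injective)
    (fun i => t - hA.eigenvalues i)
    (fun x => by
      simp only [← neg_sub (hA.eigenvalues _) t, neg_mul, Finset.sum_neg_distrib,
        LinearMap.coe_comp, Function.comp_apply, Submodule.coe_subtype, mulVecLin_apply,
        ← hA.dotProduct_mulVec_sub_eq_sum]
      linarith [hW x x.2])
  have hcompl : Fintype.card {i // 0 ≤ t - hA.eigenvalues i} =
      Fintype.card V - Fintype.card {i // t < hA.eigenvalues i} := by
    rw [← Fintype.card_subtype_compl]
    exact Fintype.card_congr (Equiv.subtypeEquivRight fun _ => by rw [sub_nonneg, not_lt])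
  have := Fintype.card_subtype_le fun i => t < hA.eigenvalues i
  omega

end Matrix.IsHermitian

theorem Set.sum_indicator_one {V R : Type*} [Fintype V] [AddCommMonoidWithOne R] (U : Set V) :
    ∑ v, U.indicator (1 : V → R) v = U.ncard := by
  simp [Set.indicator_apply, Set.ncard_eq_toFinset_card']

theorem linearIndependent_of_apply_eq_zero {ι V K : Type*} [Field K] {x : ι → V → K}
    (p : ι → V) (hdiag : ∀ i, x i (p i) ≠ 0) (hoff : ∀ i j, i ≠ j → x j (p i) = 0) :
    LinearIndependent K x := by
  refine linearIndependent_iff'.mpr fun s g hg i hi => ?_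
  have hpi := congrFun hg (p i)
  rw [Finset.sum_apply, Finset.sum_eq_single_of_mem i hi fun j _ hji => by
    rw [Pi.smul_apply, hoff i j hji.symm, smul_zero]] at hpi
  simpa [hdiag i] using hpi

section SumZero

variable (V : Type*) [Fintype V]

def sumZero : Submodule ℝ (V → ℝ) :=
  LinearMap.ker (Fintype.linearCombination ℝ (1 : V → ℝ))

variable {V}

@[simp]
theorem mem_sumZero {x : V → ℝ} : x ∈ sumZero V ↔ ∑ v, x v = 0 := by
  simp [sumZero, Fintype.linearCombination_apply]

theorem card_le_finrank_sumZero_add_one :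
    Fintype.card V ≤ Module.finrank ℝ (sumZero V) + 1 := by
  have hrank := LinearMap.finrank_range_add_finrank_ker (Fintype.linearCombination ℝ (1 : V → ℝ))
  have hrange := Submodule.finrank_le (LinearMap.range (Fintype.linearCombination ℝ (1 : V → ℝ)))
  rw [Module.finrank_fintype_fun_eq_card] at hrank
  rw [Module.finrank_self] at hrange
  rw [sumZero]
  omega

end SumZero

namespace SimpleGraph

variable {V : Type*} [Fintype V] [DecidableEq V] (G : SimpleGraph V) [DecidableRel G.Adj]

theorem signlessLap_eq_incMatrix_mul_transpose :
    signlessLap G = G.incMatrix ℝ * (G.incMatrix ℝ)ᵀ := by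
  rw [incMatrix_mul_transpose]
  ext u v
  by_cases huv : u = v
  · subst huv; simp [signlessLap, degMatrix]
  · simp [signlessLap, degMatrix, huv, adjMatrix_apply]

theorem posSemidef_signlessLap : (signlessLap G).PosSemidef := by
  rw [signlessLap_eq_incMatrix_mul_transpose, ← conjTranspose_eq_transpose_of_trivial]
  exact posSemidef_self_mul_conjTranspose _

theorem signlessLap_add_signlessLap_compl :
    signlessLap G + signlessLap Gᶜ = ((Fintype.card V : ℝ) - 2) • 1 + of 1 := by
  ext u v
  by_cases huv : u = v
  · subst huv
    have := G.degree_lt_card_verts u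
    simp [signlessLap, degMatrix, degree_compl]
    rw [Nat.cast_sub (by omega), Nat.cast_sub (by omega), Nat.cast_one]
    ring
  · by_cases h : G.Adj u v <;> simp [signlessLap, degMatrix, huv, adjMatrix_apply, h]

theorem signlessLap_mulVec_eq (x : V → ℝ) :
    signlessLap G *ᵥ x =
      ((Fintype.card V : ℝ) - 2) • x + (fun _ => ∑ u, x u) - signlessLap Gᶜ *ᵥ x := by
  rw [eq_sub_of_add_eq (signlessLap_add_signlessLap_compl G), sub_mulVec, add_mulVec,
    smul_mulVec, one_mulVec]
  congr 2
  ext v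
  simp [mulVec, dotProduct]

theorem dotProduct_signlessLap_mulVec (x : V → ℝ) :
    x ⬝ᵥ (signlessLap G *ᵥ x) =
      ((Fintype.card V : ℝ) - 2) * (x ⬝ᵥ x) + (∑ v, x v) ^ 2 - x ⬝ᵥ (signlessLap Gᶜ *ᵥ x) := by
  rw [signlessLap_mulVec_eq, dotProduct_sub, dotProduct_add, dotProduct_smul, smul_eq_mul, sq]
  simp [dotProduct, Finset.sum_mul]

theorem signlessLap_mulVec_apply (x : V → ℝ) (v : V) :
    (signlessLap G *ᵥ x) v = ∑ u ∈ G.neighborFinset v, (x v + x u) := by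
  simp only [signlessLap, add_mulVec, Pi.add_apply, degMatrix_mulVec_apply, adjMatrix_mulVec_apply,
    Finset.sum_add_distrib, Finset.sum_const, nsmul_eq_mul, card_neighborFinset_eq_degree]

variable {G}

theorem signlessLap_mulVec_indicator_sub_indicator {c : G.ConnectedComponent} {U W : Set V}
    (hUW : U ∪ W = c.supp) (hdisj : Disjoint U W)
    (hbip : ∀ ⦃u v : V⦄, u ∈ c.supp → G.Adj u v → (u ∈ U ∧ v ∈ W) ∨ (u ∈ W ∧ v ∈ U)) :
    signlessLap G *ᵥ (U.indicator 1 - W.indicator 1) = 0 := by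
  have hU : ∀ v ∈ U, (U.indicator 1 - W.indicator 1 : V → ℝ) v = 1 := fun v hv => by
    simp [hv, hdisj.notMem_of_mem_left hv]
  have hW : ∀ v ∈ W, (U.indicator 1 - W.indicator 1 : V → ℝ) v = -1 := fun v hv => by
    simp [hv, hdisj.notMem_of_mem_right hv]
  have hout : ∀ v ∉ c.supp, (U.indicator 1 - W.indicator 1 : V → ℝ) v = 0 := fun v hv => by
    rw [← hUW, Set.mem_union, not_or] at hv
    simp [hv.1, hv.2]
  ext v
  rw [signlessLap_mulVec_apply, Pi.zero_apply]
  refine Finset.sum_eq_zero fun u hu => ?_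
  rw [mem_neighborFinset] at hu
  by_cases hv : v ∈ c.supp
  · rcases hbip hv hu with ⟨hvU, huW⟩ | ⟨hvW, huU⟩
    · rw [hU v hvU, hW u huW]; ring
    · rw [hW v hvW, hU u huU]; ring
  · rw [hout v hv, hout u fun h => hv ((c.mem_supp_congr_adj hu).mpr h), add_zero]

theorem dotProduct_signlessLap_mulVec_indicator_le {U W : Set V} (hdisj : Disjoint U W)
    (hnbr : ∀ ⦃u v : V⦄, u ∈ U → G.Adj u v → v ∈ W) :
    U.indicator 1 ⬝ᵥ (signlessLap G *ᵥ U.indicator 1) ≤ U.ncard * W.ncard := by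
  have hdeg : ∀ v ∈ U, (G.degree v : ℝ) ≤ W.ncard := fun v hv => by
    rw [← card_neighborFinset_eq_degree, Set.ncard_eq_toFinset_card']
    exact_mod_cast Finset.card_le_card fun u hu =>
      Set.mem_toFinset.mpr (hnbr hv ((mem_neighborFinset _ _ _).mp hu))
  calc U.indicator 1 ⬝ᵥ (signlessLap G *ᵥ U.indicator 1)
      = ∑ v, U.indicator (fun v => (G.degree v : ℝ)) v := by
        refine Finset.sum_congr rfl fun v _ => ?_
        by_cases hv : v ∈ U
        · rw [Set.indicator_of_mem hv (fun v => (G.degree v : ℝ)), signlessLap_mulVec_apply,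
            Set.indicator_of_mem hv, Pi.one_apply, one_mul, ← card_neighborFinset_eq_degree,
            Finset.card_eq_sum_ones, Nat.cast_sum, Nat.cast_one]
          refine Finset.sum_congr rfl fun u hu => ?_
          rw [Set.indicator_of_notMem
            (hdisj.notMem_of_mem_right (hnbr hv ((mem_neighborFinset _ _ _).mp hu))), add_zero]
        · simp [hv]
    _ ≤ ∑ v, U.indicator (fun _ => (W.ncard : ℝ)) v :=
        Finset.sum_le_sum fun v _ => Set.indicator_le_indicator' (hdeg v)
    _ = U.ncard * W.ncard := by
        simp [Set.indicator_apply, Finset.sum_ite, Set.ncard_eq_toFinset_card']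

theorem ConnectedComponent.nonempty_of_union_eq_supp {V : Type*} [Finite V] {G : SimpleGraph V}
    {c : G.ConnectedComponent} {U W : Set V} (hUW : U ∪ W = c.supp) (hcard : U.ncard = W.ncard) :
    U.Nonempty := by
  obtain ⟨v, hv⟩ := c.nonempty_supp
  rcases (hUW ▸ hv : v ∈ U ∪ W) with hvU | hvW
  · exact ⟨v, hvU⟩
  · exact (Set.ncard_pos).mp (hcard ▸ (Set.ncard_pos).mpr ⟨v, hvW⟩)

end SimpleGraph

namespace IsBalancedBipartiteComponent

variable {V : Type*} [Fintype V] [DecidableEq V] {H : SimpleGraph V} [DecidableRel H.Adj]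
  {c : H.ConnectedComponent}

theorem exists_signlessLap_mulVec_eq_zero (h : IsBalancedBipartiteComponent H c) :
    ∃ x : V → ℝ, signlessLap H *ᵥ x = 0 ∧ ∑ v, x v = 0 ∧ (∀ v ∉ c.supp, x v = 0) ∧
      ∃ v, x v ≠ 0 := by
  obtain ⟨U, W, hUW, hdisj, hcard, hbip⟩ := h
  obtain ⟨p, hp⟩ := c.nonempty_of_union_eq_supp hUW hcard
  refine ⟨U.indicator 1 - W.indicator 1,
    SimpleGraph.signlessLap_mulVec_indicator_sub_indicator hUW hdisj hbip, ?_, fun v hv => ?_,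
    p, ?_⟩
  · simp [Finset.sum_sub_distrib, Set.sum_indicator_one, hcard]
  · rw [← hUW, Set.mem_union, not_or] at hv
    simp [hv.1, hv.2]
  · simp [hp, hdisj.notMem_of_mem_left hp]

theorem exists_sum_pos (h : IsBalancedBipartiteComponent H c) :
    ∃ y : V → ℝ, 0 < ∑ v, y v ∧ y ⬝ᵥ (signlessLap H *ᵥ y) ≤ (∑ v, y v) ^ 2 := by
  obtain ⟨U, W, hUW, hdisj, hcard, hbip⟩ := h
  have hnbr : ∀ ⦃u v : V⦄, u ∈ U → H.Adj u v → v ∈ W := fun u v hu huv =>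
    ((hbip (hUW ▸ Set.mem_union_left W hu) huv).resolve_right
      fun h => hdisj.notMem_of_mem_left hu h.1).2
  refine ⟨U.indicator 1, ?_, ?_⟩
  · rw [Set.sum_indicator_one]
    exact_mod_cast (Set.ncard_pos).mpr (c.nonempty_of_union_eq_supp hUW hcard)
  · rw [Set.sum_indicator_one, sq]
    nth_rewrite 2 [hcard]
    exact SimpleGraph.dotProduct_signlessLap_mulVec_indicator_le hdisj hnbr

end IsBalancedBipartiteComponent

namespace SimpleGraph

variable {V : Type*} [Fintype V] [DecidableEq V]

theorem ncard_balancedBipartiteComponents_le_finrank (H : SimpleGraph V) [DecidableRel H.Adj] :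
    {c : H.ConnectedComponent | IsBalancedBipartiteComponent H c}.ncard ≤
      Module.finrank ℝ (LinearMap.ker (toLin' (signlessLap H)) ⊓ sumZero V : Submodule ℝ _) := by
  set B := {c : H.ConnectedComponent | IsBalancedBipartiteComponent H c}
  choose x hxQ hxsum hxsupp p hp using fun c : B => c.2.exists_signlessLap_mulVec_eq_zero
  have hpc (c : B) : p c ∈ (c : H.ConnectedComponent).supp := by
    by_contra hc
    exact hp c (hxsupp c _ hc)
  have hli : LinearIndependent ℝ x := linearIndependent_of_apply_eq_zero p hp fun c d hcd =>
    hxsupp d (p c) fun hd => hcd (Subtype.ext ((hpc c).symm.trans hd))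
  calc B.ncard = Fintype.card B := by rw [← Nat.card_coe_set_eq, Nat.card_eq_fintype_card]
    _ = Module.finrank ℝ (Submodule.span ℝ (Set.range x)) := (finrank_span_eq_card hli).symm
    _ ≤ _ := Submodule.finrank_mono <| Submodule.span_le.mpr <| Set.range_subset_iff.mpr
        fun c => Submodule.mem_inf.mpr ⟨by simp [hxQ], by simp [hxsum]⟩

variable (G : SimpleGraph V) [DecidableRel G.Adj]

theorem ker_inf_sumZero_le_eigenspace :
    LinearMap.ker (toLin' (signlessLap Gᶜ)) ⊓ sumZero V ≤
      Module.End.eigenspace (toLin' (signlessLap G)) ((Fintype.card V : ℝ) - 2) := by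
  intro x hx
  obtain ⟨hxker, hxsum⟩ := Submodule.mem_inf.mp hx
  rw [LinearMap.mem_ker, toLin'_apply] at hxker
  rw [Module.End.mem_eigenspace_iff, toLin'_apply, signlessLap_mulVec_eq, hxker,
    mem_sumZero.mp hxsum]
  ext; simp

theorem card_lt_eigenvalues_signlessLap_le_one (hQ : (signlessLap G).IsHermitian) :
    Fintype.card {i // (Fintype.card V : ℝ) - 2 < hQ.eigenvalues i} ≤ 1 := by
  have hform : ∀ x ∈ sumZero V,
      x ⬝ᵥ (signlessLap G *ᵥ x) ≤ ((Fintype.card V : ℝ) - 2) * (x ⬝ᵥ x) := fun x hx => by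
    have hpos := (posSemidef_signlessLap Gᶜ).dotProduct_mulVec_nonneg x
    rw [star_trivial] at hpos
    rw [dotProduct_signlessLap_mulVec, mem_sumZero.mp hx]
    linarith
  have := hQ.card_lt_eigenvalues_add_finrank_le _ hform
  have := card_le_finrank_sumZero_add_one (V := V)
  omega

theorem ncard_balancedBipartiteComponents_compl_lt_card_le_eigenvalues
    (hQ : (signlessLap G).IsHermitian)
    (hB : {c : Gᶜ.ConnectedComponent | IsBalancedBipartiteComponent Gᶜ c}.Nonempty) :
    {c : Gᶜ.ConnectedComponent | IsBalancedBipartiteComponent Gᶜ c}.ncard <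
      Fintype.card {i // (Fintype.card V : ℝ) - 2 ≤ hQ.eigenvalues i} := by
  set X := LinearMap.ker (toLin' (signlessLap Gᶜ)) ⊓ sumZero V
  obtain ⟨c, hc⟩ := hB
  obtain ⟨y, hy, hyQ⟩ := hc.exists_sum_pos
  have hyX : y ∉ X := fun hyX => hy.ne' (mem_sumZero.mp (Submodule.mem_inf.mp hyX).2)
  have hyG : ((Fintype.card V : ℝ) - 2) * (y ⬝ᵥ y) ≤ y ⬝ᵥ (signlessLap G *ᵥ y) := by
    rw [dotProduct_signlessLap_mulVec]
    linarith
  calc _ < Module.finrank ℝ X + 1 :=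
        Nat.lt_succ_of_le (ncard_balancedBipartiteComponents_le_finrank Gᶜ)
    _ = Module.finrank ℝ (X ⊔ ℝ ∙ y : Submodule ℝ _) :=
        (Submodule.finrank_sup_span_singleton hyX).symm
    _ ≤ _ := hQ.finrank_le_card_le_eigenvalues _ <|
        hQ.le_dotProduct_mulVec_of_mem_sup_span_singleton
          (fun x hx => by simpa using ker_inf_sumZero_le_eigenspace G hx) hyG

end SimpleGraph

theorem multiplicity_of_balanced_components_general (n k : ℕ) (hk1 : 1 ≤ k)
    (G : SimpleGraph (Fin n)) [DecidableRel G.Adj]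
    (h : k ≤ {c : Gᶜ.ConnectedComponent | IsBalancedBipartiteComponent Gᶜ c}.ncard) :
    Module.End.HasEigenvalue (Matrix.toLin' (signlessLap G)) ((n : ℝ) - 2) ∧
    k ≤ Module.finrank ℝ
        (Module.End.eigenspace (Matrix.toLin' (signlessLap G)) ((n : ℝ) - 2)) ∧
    qEig G (k + 1) = (n : ℝ) - 2 := by
  rw [show (n : ℝ) = Fintype.card (Fin n) by simp]
  have hQ : (signlessLap G).IsHermitian := (posSemidef_signlessLap G).isHermitian
  have hrank := h.trans <| (ncard_balancedBipartiteComponents_le_finrank Gᶜ).trans <|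
    Submodule.finrank_mono (ker_inf_sumZero_le_eigenspace G)
  have hB := Set.nonempty_of_ncard_ne_zero
    (s := {c : Gᶜ.ConnectedComponent | IsBalancedBipartiteComponent Gᶜ c}) (by omega)
  refine ⟨Module.End.hasEigenvalue_iff.mpr fun hbot => by rw [hbot, finrank_bot] at hrank; omega,
    hrank, kthEig_add_one_eq hQ ?_ ?_⟩
  · exact h.trans_lt (ncard_balancedBipartiteComponents_compl_lt_card_le_eigenvalues G hQ hB)
  · exact (card_lt_eigenvalues_signlessLap_le_one G hQ).trans hk1

/-- Let `1 ≤ k < n` and let `G` be a graph of order `n` whose complement has at least `k`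
balanced bipartite components. Then `n - 2` is an eigenvalue of `Q(G)` with multiplicity
at least `k`; in particular `q_{k+1}(G) = n - 2`. -/
theorem multiplicity_of_balanced_components (n k : ℕ) (hk1 : 1 ≤ k) (hkn : k < n)
    (G : SimpleGraph (Fin n)) [DecidableRel G.Adj]
    (h : k ≤ {c : Gᶜ.ConnectedComponent | IsBalancedBipartiteComponent Gᶜ c}.ncard) :
    Module.End.HasEigenvalue (Matrix.toLin' (signlessLap G)) ((n : ℝ) - 2) ∧
    k ≤ Module.finrank ℝ
        (Module.End.eigenspace (Matrix.toLin' (signlessLap G)) ((n : ℝ) - 2)) ∧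
    qEig G (k + 1) = (n : ℝ) - 2 :=
  multiplicity_of_balanced_components_general n k hk1 G h
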